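/- arXiv:0806.0390 — 2 statements merged into one kernel-verified Lean document; each statement's English description precedes it below -/
import Mathlib

section
/- Double cone: Let P be a poset that is the union of two subposets Δ_1, Δ_2 intersecting in exactly one element p, where p is simultaneously the unique minimal element of Δ_1 and the unique maximal element of Δ_2. Then for any directed system G of abelian groups over P, H^1(or(P); G) ≅ H^1(or(Δ_2); G), and if G consists of vector spaces then also H^0(or(P); G) ≅ H^0(or(Δ_2); G). -/
/-- The `k`-simplices of the order complex of a poset `P`:
strictly increasing chains `p_0 < p_1 < ... < p_k`. -/
def OSimplex (P : Type) [PartialOrder P] (k : ℕ) : Type :=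
  {f : Fin (k + 1) → P // StrictMono f}

/-- The top (maximal) vertex of a simplex of the order complex. -/
def OSimplex.top {P : Type} [PartialOrder P] {k : ℕ} (σ : OSimplex P k) : P :=
  σ.1 (Fin.last k)

/-- The `i`-th face of a simplex of the order complex (omit the `i`-th vertex). -/
def OSimplex.face {P : Type} [PartialOrder P] {k : ℕ} (σ : OSimplex P (k + 1))
    (i : Fin (k + 2)) : OSimplex P k :=
  ⟨σ.1 ∘ i.succAbove, σ.2.comp (Fin.strictMono_succAbove i)⟩

/-- Order `k`-cochains on the order complex of `P` with values in the system `G`: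
an assignment of an element of `G (top σ)` to every `k`-simplex `σ`. -/
abbrev Cochain (P : Type) [PartialOrder P] (G : P → Type) [∀ p, AddCommGroup (G p)]
    (k : ℕ) : Type :=
  ∀ σ : OSimplex P k, G σ.top

/-- The Čech-like coboundary operator on order cochains:
`(δφ)(p_0 ⋯ p_{k+1}) = ∑_{i=0}^{k} (-1)^i φ(p_0 ⋯ p̂_i ⋯ p_{k+1})
   + (-1)^{k+1} Φ(p_k, p_{k+1}) φ(p_0 ⋯ p_k)`,
written uniformly by pushing the value at the top vertex of each face into
`G (top σ)` along the structure maps (for a functorial system, the structure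
map along a reflexive inequality is the identity). -/
def deltaHom (P : Type) [PartialOrder P] (G : P → Type) [∀ p, AddCommGroup (G p)]
    (Φ : ∀ (p q : P), p ≤ q → G p →+ G q) (k : ℕ) :
    Cochain P G k →+ Cochain P G (k + 1) :=
  AddMonoidHom.mk'
    (fun φ σ => ∑ i : Fin (k + 2),
      ((-1 : ℤ) ^ (i : ℕ)) •
        Φ (σ.face i).top σ.top (σ.2.monotone (Fin.le_last _)) (φ (σ.face i)))
    (fun φ ψ => by
      funext σ
      simp only [Pi.add_apply, map_add, smul_add, Finset.sum_add_distrib])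

/-- The coboundaries: in degree `0` the trivial subgroup, in degree `k+1`
the image of `δ^k`. -/
def cobound (P : Type) [PartialOrder P] (G : P → Type) [∀ p, AddCommGroup (G p)]
    (Φ : ∀ (p q : P), p ≤ q → G p →+ G q) : (k : ℕ) → AddSubgroup (Cochain P G k)
  | 0 => ⊥
  | (k + 1) => (deltaHom P G Φ k).range

/-- Order cohomology: cocycles modulo coboundaries. -/
abbrev OH (P : Type) [PartialOrder P] (G : P → Type) [∀ p, AddCommGroup (G p)]
    (Φ : ∀ (p q : P), p ≤ q → G p →+ G q) (k : ℕ) : Type :=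
  (deltaHom P G Φ k).ker ⧸ (cobound P G Φ k).addSubgroupOf (deltaHom P G Φ k).ker

/-!
Every element outside `Δ₂` lies in `Δ₁`, hence above `p = max Δ₂`, so the map `r : P → Δ₂`
fixing `Δ₂` and sending everything else to `p` is right adjoint to the inclusion. Pulling
cochains on `Δ₂` back along `r`, with values transported from `r q` up to `q` by the structure
maps, gives extensions `E₀`, `E₁` with `res ∘ Eₖ = id` and `E₁ ∘ δ = δ ∘ E₀`. A 0-cocycle `φ` on
`P` equals `E₀ (res φ)`, and a 1-cocycle differs from `E₁ (res φ)` by the coboundary of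
`q ↦ φ(r q, q)`; hence restriction is bijective on `H⁰` and `H¹`.
-/

namespace OSimplex

variable {P : Type} [PartialOrder P]

def vertex (q : P) : OSimplex P 0 :=
  ⟨![q], Fin.strictMono_iff_lt_succ.2 fun i => i.elim0⟩

def edge {a b : P} (h : a < b) : OSimplex P 1 :=
  ⟨![a, b], Fin.strictMono_iff_lt_succ.2 fun i => by fin_cases i; exact h⟩

def triangle {a b c : P} (h₁ : a < b) (h₂ : b < c) : OSimplex P 2 :=
  ⟨![a, b, c], Fin.strictMono_iff_lt_succ.2 fun i => by fin_cases i; exacts [h₁, h₂]⟩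

def map {Q : Type} [PartialOrder Q] {k : ℕ} (f : P → Q) (hf : StrictMono f)
    (σ : OSimplex P k) : OSimplex Q k :=
  ⟨f ∘ σ.1, hf.comp σ.2⟩

lemma face_top_le {k : ℕ} (σ : OSimplex P (k + 1)) (i : Fin (k + 2)) :
    (σ.face i).top ≤ σ.top :=
  σ.2.monotone (Fin.le_last _)

lemma exists_eq_vertex (σ : OSimplex P 0) : ∃ q, σ = vertex q :=
  ⟨σ.top, Subtype.ext <| funext fun i => by fin_cases i; rfl⟩

lemma exists_eq_edge (σ : OSimplex P 1) : ∃ (a b : P) (h : a < b), σ = edge h :=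
  ⟨_, _, σ.2 Fin.zero_lt_one, Subtype.ext <| funext fun i => by fin_cases i <;> rfl⟩

lemma exists_eq_triangle (σ : OSimplex P 2) :
    ∃ (a b c : P) (h₁ : a < b) (h₂ : b < c), σ = triangle h₁ h₂ :=
  ⟨_, _, _, σ.2 (show (0 : Fin 3) < 1 by decide), σ.2 (show (1 : Fin 3) < 2 by decide),
    Subtype.ext <| funext fun i => by fin_cases i <;> rfl⟩

lemma edge_face_zero {a b : P} (h : a < b) : (edge h).face 0 = vertex b :=
  Subtype.ext <| funext fun i => by fin_cases i; rfl

lemma edge_face_one {a b : P} (h : a < b) : (edge h).face 1 = vertex a :=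
  Subtype.ext <| funext fun i => by fin_cases i; rfl

lemma triangle_face_zero {a b c : P} (h₁ : a < b) (h₂ : b < c) :
    (triangle h₁ h₂).face 0 = edge h₂ :=
  Subtype.ext <| funext fun i => by fin_cases i <;> rfl

lemma triangle_face_one {a b c : P} (h₁ : a < b) (h₂ : b < c) :
    (triangle h₁ h₂).face 1 = edge (h₁.trans h₂) :=
  Subtype.ext <| funext fun i => by fin_cases i <;> rfl

lemma triangle_face_two {a b c : P} (h₁ : a < b) (h₂ : b < c) :
    (triangle h₁ h₂).face 2 = edge h₁ :=
  Subtype.ext <| funext fun i => by fin_cases i <;> rfl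

lemma map_vertex {Q : Type} [PartialOrder Q] (f : P → Q) (hf : StrictMono f) (q : P) :
    (vertex q).map f hf = vertex (f q) :=
  Subtype.ext <| funext fun i => by fin_cases i; rfl

lemma map_edge {Q : Type} [PartialOrder Q] (f : P → Q) (hf : StrictMono f) {a b : P}
    (h : a < b) : (edge h).map f hf = edge (hf h) :=
  Subtype.ext <| funext fun i => by fin_cases i <;> rfl

end OSimplex

instance {P : Type} [PartialOrder P] {G : P → Type} [∀ p, AddCommGroup (G p)]
    {Φ : ∀ p q : P, p ≤ q → G p →+ G q} [DirectedSystem G (Φ · · ·)] (S : Set P) :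
    DirectedSystem (fun x : S => G x) (fun x y h => Φ x y h) where
  map_self _ x := DirectedSystem.map_self' Φ x
  map_map _ _ _ hij hjk x := DirectedSystem.map_map' Φ hij hjk x

lemma GaloisConnection.u_coe {P : Type} [PartialOrder P] {S : Set P} {r : P → S}
    (gc : GaloisConnection ((↑) : S → P) r) (s : S) : r s = s :=
  le_antisymm (Subtype.coe_le_coe.1 (gc.l_u_le s)) (gc.le_u_l s)

lemma exists_galoisConnection_coe_of_cone {P : Type} [PartialOrder P] {S : Set P} {p : P}
    (hp : p ∈ S) (hle : ∀ x ∈ S, x ≤ p) (hge : ∀ x ∉ S, p ≤ x) :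
    ∃ r : P → S, GaloisConnection ((↑) : S → P) r := by
  classical
  refine ⟨fun q => if hq : q ∈ S then ⟨q, hq⟩ else ⟨p, hp⟩, fun s q => ?_⟩
  by_cases hq : q ∈ S
  · simp only [dif_pos hq, ← Subtype.coe_le_coe]
  · simp only [dif_neg hq, ← Subtype.coe_le_coe]
    exact iff_of_true ((hle s s.2).trans (hge q hq)) (hle s s.2)

namespace Cochain

open OSimplex

variable {P : Type} [PartialOrder P] {G : P → Type} [∀ p, AddCommGroup (G p)]
  {Φ : ∀ p q : P, p ≤ q → G p →+ G q}

section Values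

def vertexVal (φ : Cochain P G 0) (q : P) : G q := φ (vertex q)

open scoped Classical in
/-- Extending by `0` off the strict chains `a < b` makes the cocycle identity
`edgeVal_cocycle` hold on all weak chains `a ≤ b ≤ c`. -/
noncomputable def edgeVal (φ : Cochain P G 1) (a b : P) : G b :=
  if h : a < b then φ (edge h) else 0

lemma edgeVal_of_lt (φ : Cochain P G 1) {a b : P} (h : a < b) : edgeVal φ a b = φ (edge h) := by
  unfold edgeVal; exact dif_pos h

lemma edgeVal_of_not_lt (φ : Cochain P G 1) {a b : P} (h : ¬a < b) : edgeVal φ a b = 0 := by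
  unfold edgeVal; exact dif_neg h

lemma edgeVal_self (φ : Cochain P G 1) (a : P) : edgeVal φ a a = 0 :=
  edgeVal_of_not_lt φ (lt_irrefl a)

lemma edgeVal_zero (a b : P) : edgeVal (0 : Cochain P G 1) a b = 0 := by
  by_cases h : a < b
  · exact edgeVal_of_lt 0 h
  · exact edgeVal_of_not_lt 0 h

lemma edgeVal_add (φ ψ : Cochain P G 1) (a b : P) :
    edgeVal (φ + ψ) a b = edgeVal φ a b + edgeVal ψ a b := by
  by_cases h : a < b
  · simp only [edgeVal_of_lt _ h]; rfl
  · simp only [edgeVal_of_not_lt _ h, add_zero]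

lemma ext_vertexVal {φ ψ : Cochain P G 0} (h : ∀ q, vertexVal φ q = vertexVal ψ q) :
    φ = ψ :=
  funext fun σ => by obtain ⟨q, rfl⟩ := exists_eq_vertex σ; exact h q

lemma ext_edgeVal {φ ψ : Cochain P G 1} (h : ∀ a b, a < b → edgeVal φ a b = edgeVal ψ a b) :
    φ = ψ :=
  funext fun σ => by
    obtain ⟨a, b, hab, rfl⟩ := exists_eq_edge σ
    have := h a b hab
    rwa [edgeVal_of_lt _ hab, edgeVal_of_lt _ hab] at this

lemma eq_zero_of_triangle {φ : Cochain P G 2}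
    (h : ∀ (a b c : P) (h₁ : a < b) (h₂ : b < c), φ (triangle h₁ h₂) = 0) : φ = 0 :=
  funext fun σ => by
    obtain ⟨a, b, c, h₁, h₂, rfl⟩ := exists_eq_triangle σ
    exact h a b c h₁ h₂

def ofVertices (f : ∀ q, G q) : Cochain P G 0 := fun σ => f σ.top

def ofEdges (f : P → ∀ b : P, G b) : Cochain P G 1 := fun σ => f (σ.1 0) σ.top

lemma vertexVal_ofVertices (f : ∀ q, G q) (q : P) : vertexVal (ofVertices f) q = f q := rfl

lemma edgeVal_ofEdges (f : P → ∀ b : P, G b) {a b : P} (h : a < b) :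
    edgeVal (ofEdges f) a b = f a b :=
  edgeVal_of_lt _ h

end Values

section Coboundary

lemma map_apply_congr {k : ℕ} (φ : Cochain P G k) {σ τ : OSimplex P k} (e : σ = τ) {t : P}
    (h : σ.top ≤ t) : Φ σ.top t h (φ σ) = Φ τ.top t (e ▸ h) (φ τ) := by
  subst e; rfl

lemma deltaHom_apply {k : ℕ} (φ : Cochain P G k) (σ : OSimplex P (k + 1)) :
    deltaHom P G Φ k φ σ = ∑ i : Fin (k + 2),
      ((-1 : ℤ) ^ (i : ℕ)) • Φ (σ.face i).top σ.top (σ.face_top_le i) (φ (σ.face i)) :=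
  rfl

variable [DirectedSystem G (Φ · · ·)]

lemma deltaHom_zero_edge (φ : Cochain P G 0) {a b : P} (h : a < b) :
    deltaHom P G Φ 0 φ (edge h) = vertexVal φ b - Φ a b h.le (vertexVal φ a) := by
  rw [deltaHom_apply, Fin.sum_univ_two, map_apply_congr φ (edge_face_zero h),
    map_apply_congr φ (edge_face_one h)]
  simp only [Fin.val_zero, Fin.val_one, pow_zero, pow_one, one_smul, neg_smul,
    ← sub_eq_add_neg]
  exact congrArg (· - _) (DirectedSystem.map_self' Φ _)

lemma deltaHom_one_triangle (φ : Cochain P G 1) {a b c : P} (h₁ : a < b) (h₂ : b < c) :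
    deltaHom P G Φ 1 φ (triangle h₁ h₂) =
      edgeVal φ b c - edgeVal φ a c + Φ b c h₂.le (edgeVal φ a b) := by
  rw [deltaHom_apply, Fin.sum_univ_three, map_apply_congr φ (triangle_face_zero h₁ h₂),
    map_apply_congr φ (triangle_face_one h₁ h₂),
    map_apply_congr φ (triangle_face_two h₁ h₂),
    edgeVal_of_lt φ h₁, edgeVal_of_lt φ h₂, edgeVal_of_lt φ (h₁.trans h₂)]
  simp only [Fin.val_zero, Fin.val_one, Fin.val_two, pow_zero, pow_one, neg_one_sq, one_smul,
    neg_smul, ← sub_eq_add_neg]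
  exact congrArg₂ (· + ·) (congrArg₂ (· - ·) (DirectedSystem.map_self' Φ _)
    (DirectedSystem.map_self' Φ _)) rfl

lemma edgeVal_deltaHom_zero (φ : Cochain P G 0) {a b : P} (hab : a ≤ b) :
    edgeVal (deltaHom P G Φ 0 φ) a b = vertexVal φ b - Φ a b hab (vertexVal φ a) := by
  rcases hab.lt_or_eq with h | rfl
  · rw [edgeVal_of_lt _ h, deltaHom_zero_edge]
  · rw [edgeVal_self, DirectedSystem.map_self' Φ, sub_self]

lemma edgeVal_cocycle {φ : Cochain P G 1} (hφ : deltaHom P G Φ 1 φ = 0) {a b c : P}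
    (hab : a ≤ b) (hbc : b ≤ c) :
    edgeVal φ b c - edgeVal φ a c + Φ b c hbc (edgeVal φ a b) = 0 := by
  rcases hab.lt_or_eq with hab | rfl
  · rcases hbc.lt_or_eq with hbc | rfl
    · rw [← deltaHom_one_triangle φ hab hbc, hφ]; rfl
    · rw [edgeVal_self, DirectedSystem.map_self' Φ, zero_sub, neg_add_cancel]
  · rw [edgeVal_self, map_zero, add_zero, sub_self]

end Coboundary

section Restriction

def restrict (S : Set P) (k : ℕ) : Cochain P G k →+ Cochain S (fun x => G x) k where
  toFun φ τ := φ (τ.map Subtype.val (Subtype.strictMono_coe _))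
  map_zero' := rfl
  map_add' _ _ := rfl

variable {S : Set P}

lemma restrict_mem_cobound {k : ℕ} {φ : Cochain P G k} (hφ : φ ∈ cobound P G Φ k) :
    restrict S k φ ∈ cobound S (fun x => G x) (fun x y h => Φ x y h) k := by
  cases k with
  | zero => rw [(AddSubgroup.mem_bot).1 hφ, map_zero]; exact zero_mem _
  | succ k =>
    obtain ⟨v, rfl⟩ := hφ
    exact ⟨restrict S k v, rfl⟩

lemma vertexVal_restrict (φ : Cochain P G 0) (s : S) :
    vertexVal (restrict S 0 φ) s = vertexVal φ s :=
  eq_of_heq (congr_arg_heq φ (map_vertex _ _ s))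

lemma edgeVal_restrict (φ : Cochain P G 1) (s t : S) :
    edgeVal (restrict S 1 φ) s t = edgeVal φ s t := by
  by_cases h : s < t
  · rw [edgeVal_of_lt _ h, edgeVal_of_lt _ (Subtype.coe_lt_coe.2 h)]
    exact eq_of_heq (congr_arg_heq φ (map_edge _ _ h))
  · rw [edgeVal_of_not_lt _ h, edgeVal_of_not_lt _ (mt Subtype.coe_lt_coe.1 h)]

theorem nonempty_addEquiv_OH_of_restrict (k : ℕ)
    (hsurj : ∀ ψ, deltaHom S (fun x => G x) (fun x y h => Φ x y h) k ψ = 0 →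
      ∃ φ, deltaHom P G Φ k φ = 0 ∧ restrict S k φ = ψ)
    (hinj : ∀ φ, deltaHom P G Φ k φ = 0 →
      restrict S k φ ∈ cobound S (fun x => G x) (fun x y h => Φ x y h) k →
        φ ∈ cobound P G Φ k) :
    Nonempty (OH P G Φ k ≃+ OH S (fun x => G x) (fun x y h => Φ x y h) k) := by
  let f : (deltaHom P G Φ k).ker →+ (deltaHom S (fun x => G x) (fun x y h => Φ x y h) k).ker :=
    AddMonoidHom.codRestrict ((restrict S k).comp (deltaHom P G Φ k).ker.subtype) _
      fun φ => by
        change restrict S (k + 1) (deltaHom P G Φ k φ) = 0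
        rw [φ.2, map_zero]
  let g := (QuotientAddGroup.mk' ((cobound S (fun x => G x) (fun x y h => Φ x y h) k).addSubgroupOf
    (deltaHom S (fun x => G x) (fun x y h => Φ x y h) k).ker)).comp f
  have hg : Function.Surjective g := by
    intro c
    obtain ⟨⟨ψ, hψ⟩, rfl⟩ := QuotientAddGroup.mk'_surjective _ c
    obtain ⟨φ, hφ, rfl⟩ := hsurj ψ hψ
    exact ⟨⟨φ, hφ⟩, rfl⟩
  have hker : g.ker = (cobound P G Φ k).addSubgroupOf (deltaHom P G Φ k).ker := by
    ext φ
    rw [AddMonoidHom.mem_ker, AddMonoidHom.comp_apply, QuotientAddGroup.mk'_apply,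
      QuotientAddGroup.eq_zero_iff, AddSubgroup.mem_addSubgroupOf,
      AddSubgroup.mem_addSubgroupOf]
    exact ⟨hinj φ φ.2, restrict_mem_cobound⟩
  exact ⟨(QuotientAddGroup.quotientAddEquivOfEq hker.symm).trans
    (QuotientAddGroup.quotientKerEquivOfSurjective g hg)⟩

end Restriction

section Coreflection

variable {S : Set P}

noncomputable def homotopy (r : P → S) (φ : Cochain P G 1) : Cochain P G 0 :=
  ofVertices fun q => edgeVal φ (r q) q

variable {r : P → S} (gc : GaloisConnection ((↑) : S → P) r) (Φ)

def extend₀ (w : Cochain S (fun x => G x) 0) : Cochain P G 0 :=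
  ofVertices fun q => Φ (r q) q (gc.l_u_le q) (vertexVal w (r q))

noncomputable def extend₁ (ψ : Cochain S (fun x => G x) 1) : Cochain P G 1 :=
  ofEdges fun a b => Φ (r b) b (gc.l_u_le b) (edgeVal ψ (r a) (r b))

lemma extend₀_zero : extend₀ Φ gc (0 : Cochain S (fun x => G x) 0) = 0 :=
  ext_vertexVal fun _ => map_zero _

lemma extend₁_zero : extend₁ Φ gc (0 : Cochain S (fun x => G x) 1) = 0 :=
  ext_edgeVal fun _ _ hab => by
    rw [extend₁, edgeVal_ofEdges _ hab, edgeVal_zero, map_zero, edgeVal_zero]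

variable {Φ} [DirectedSystem G (Φ · · ·)]

lemma map_retract_coe (f : ∀ x : S, G x) (s : S) :
    Φ (r s) s (gc.l_u_le s) (f (r s)) = f s := by
  have key : ∀ x : S, x = s → ∀ h : (x : P) ≤ s, Φ x s h (f x) = f s := by
    rintro x rfl h
    exact DirectedSystem.map_self' Φ _
  exact key _ (gc.u_coe s) _

lemma restrict_extend₀ (w : Cochain S (fun x => G x) 0) :
    restrict S 0 (extend₀ Φ gc w) = w :=
  ext_vertexVal fun s => by
    rw [vertexVal_restrict]
    exact map_retract_coe gc (vertexVal w) s

lemma restrict_extend₁ (ψ : Cochain S (fun x => G x) 1) :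
    restrict S 1 (extend₁ Φ gc ψ) = ψ :=
  ext_edgeVal fun s t hst => by
    rw [edgeVal_restrict, extend₁, edgeVal_ofEdges _ (Subtype.coe_lt_coe.2 hst), gc.u_coe s]
    exact map_retract_coe gc (edgeVal ψ s) t

lemma deltaHom_extend₁ {ψ : Cochain S (fun x => G x) 1}
    (hψ : deltaHom S (fun x => G x) (fun x y h => Φ x y h) 1 ψ = 0) :
    deltaHom P G Φ 1 (extend₁ Φ gc ψ) = 0 :=
  eq_zero_of_triangle fun a b c hab hbc => by
    rw [deltaHom_one_triangle, extend₁, edgeVal_ofEdges _ hab, edgeVal_ofEdges _ hbc,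
      edgeVal_ofEdges _ (hab.trans hbc), DirectedSystem.map_map' Φ,
      ← DirectedSystem.map_map' Φ (gc.monotone_u hbc.le) (gc.l_u_le c), ← map_sub, ← map_add,
      edgeVal_cocycle hψ (gc.monotone_u hab.le) (gc.monotone_u hbc.le), map_zero]
    rfl

lemma extend₁_deltaHom (w : Cochain S (fun x => G x) 0) :
    extend₁ Φ gc (deltaHom S (fun x => G x) (fun x y h => Φ x y h) 0 w) =
      deltaHom P G Φ 0 (extend₀ Φ gc w) :=
  ext_edgeVal fun a b hab => by
    rw [extend₁, edgeVal_ofEdges _ hab, edgeVal_deltaHom_zero _ (gc.monotone_u hab.le),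
      edgeVal_deltaHom_zero _ hab.le, extend₀, vertexVal_ofVertices, vertexVal_ofVertices,
      map_sub, DirectedSystem.map_map' Φ, DirectedSystem.map_map' Φ]

lemma extend₀_restrict {φ : Cochain P G 0} (hφ : deltaHom P G Φ 0 φ = 0) :
    extend₀ Φ gc (restrict S 0 φ) = φ :=
  ext_vertexVal fun q => by
    have h := edgeVal_deltaHom_zero (Φ := Φ) φ (gc.l_u_le q)
    rw [hφ, edgeVal_zero, eq_comm, sub_eq_zero] at h
    rw [extend₀, vertexVal_ofVertices, vertexVal_restrict, h]

lemma extend₁_restrict_add_deltaHom_homotopy {φ : Cochain P G 1}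
    (hφ : deltaHom P G Φ 1 φ = 0) :
    extend₁ Φ gc (restrict S 1 φ) + deltaHom P G Φ 0 (homotopy r φ) = φ :=
  ext_edgeVal fun a b hab => by
    have h₁ := edgeVal_cocycle hφ (gc.l_u_le a) hab.le
    have h₂ := edgeVal_cocycle hφ (gc.monotone_u hab.le) (gc.l_u_le b)
    rw [edgeVal_add, extend₁, edgeVal_ofEdges _ hab, edgeVal_restrict,
      edgeVal_deltaHom_zero _ hab.le, homotopy, vertexVal_ofVertices, vertexVal_ofVertices]
    linear_combination (norm := abel) h₂ - h₁

end Coreflection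

variable [DirectedSystem G (Φ · · ·)] {S : Set P} {r : P → S}

theorem nonempty_addEquiv_OH_zero_of_galoisConnection
    (gc : GaloisConnection ((↑) : S → P) r) :
    Nonempty (OH P G Φ 0 ≃+ OH S (fun x => G x) (fun x y h => Φ x y h) 0) :=
  nonempty_addEquiv_OH_of_restrict 0
    (fun w hw => ⟨extend₀ Φ gc w, by rw [← extend₁_deltaHom, hw, extend₁_zero],
      restrict_extend₀ gc w⟩)
    (fun φ hφ hres => by
      rw [← extend₀_restrict gc hφ, (AddSubgroup.mem_bot).1 hres, extend₀_zero]
      exact zero_mem _)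

theorem nonempty_addEquiv_OH_one_of_galoisConnection
    (gc : GaloisConnection ((↑) : S → P) r) :
    Nonempty (OH P G Φ 1 ≃+ OH S (fun x => G x) (fun x y h => Φ x y h) 1) :=
  nonempty_addEquiv_OH_of_restrict 1
    (fun ψ hψ => ⟨extend₁ Φ gc ψ, deltaHom_extend₁ gc hψ, restrict_extend₁ gc ψ⟩)
    (fun φ hφ ⟨w, hw⟩ => ⟨extend₀ Φ gc w + homotopy r φ, by
      rw [map_add, ← extend₁_deltaHom, hw, extend₁_restrict_add_deltaHom_homotopy gc hφ]⟩)

end Cochain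

/-- double cone. Let `P` be a poset that is the union of two
subposets `Δ₁`, `Δ₂` intersecting in exactly one element `p`, where `p` is
simultaneously the unique minimal element of `Δ₁` and the unique maximal element
of `Δ₂`.  Then for any directed system `G` of abelian groups over `P`,
`H^1(or(P); G) ≅ H^1(or(Δ₂); G)`; and if `G` consists of (rational) vector
spaces, then also `H^0(or(P); G) ≅ H^0(or(Δ₂); G)`. -/
theorem doubleCone_orderCohomology (P : Type) [PartialOrder P]
    (G : P → Type) [∀ p, AddCommGroup (G p)]
    (Φ : ∀ (p q : P), p ≤ q → G p →+ G q)
    (hrefl : ∀ (p : P) (x : G p), Φ p p le_rfl x = x)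
    (htrans : ∀ (p q r : P) (h₁ : p ≤ q) (h₂ : q ≤ r) (x : G p),
      Φ q r h₂ (Φ p q h₁ x) = Φ p r (h₁.trans h₂) x)
    (Δ₁ Δ₂ : Set P) (p : P)
    (hcover : Δ₁ ∪ Δ₂ = Set.univ)
    (hmeet : Δ₁ ∩ Δ₂ = {p})
    (hmin : ∀ x ∈ Δ₁, p ≤ x)
    (hmax : ∀ x ∈ Δ₂, x ≤ p) :
    Nonempty (OH P G Φ 1 ≃+ OH Δ₂ (fun x => G x.1) (fun x y h => Φ x.1 y.1 h) 1) ∧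
      ((∀ q : P, Module ℚ (G q)) →
        Nonempty (OH P G Φ 0 ≃+ OH Δ₂ (fun x => G x.1) (fun x y h => Φ x.1 y.1 h) 0)) := by
  have : DirectedSystem G (Φ · · ·) := ⟨hrefl, fun _ _ _ => htrans _ _ _⟩
  have hp : p ∈ Δ₂ := (hmeet.ge rfl).2
  have hge : ∀ x ∉ Δ₂, p ≤ x := fun x hx =>
    hmin x (((Set.ext_iff.1 hcover x).2 trivial).resolve_right hx)
  obtain ⟨r, gc⟩ := exists_galoisConnection_coe_of_cone hp hmax hge
  exact ⟨Cochain.nonempty_addEquiv_OH_one_of_galoisConnection gc,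
    fun _ => Cochain.nonempty_addEquiv_OH_zero_of_galoisConnection gc⟩
end

section
/- Characterization of the Euler cycle: the Euler cycle is the unique assignment Z ↦ e(Z) of rational 0-chains to finite simplicial complexes satisfying (1) inclusion-exclusion e(X∪Y) = e(X) + e(Y) − e(X∩Y), (2) calibration: for the full k-simplex σ (with all its faces), e(σ) = (Σ_v v)/(k+1) summing over its k+1 vertices, and (3) e(∅) = 0. -/
/-- The Euler-cycle coefficient of a vertex `v` in a finite abstract simplicial
complex `X`: `e(v,X) = ∑_k (−1)^k · N_k(v,X) / (k+1)`. -/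
def eulerCoeff {V : Type} [DecidableEq V] (X : Finset (Finset V)) (v : V) : ℚ :=
  ∑ s ∈ X.filter (fun s => v ∈ s), ((-1 : ℚ)) ^ (s.card - 1) / (s.card : ℚ)

/-- A finite abstract simplicial complex: a finite family of nonempty finite
simplices closed under passing to nonempty subsets. -/
def IsComplex {V : Type} (X : Finset (Finset V)) : Prop :=
  (∀ s ∈ X, s.Nonempty) ∧ ∀ s ∈ X, ∀ t ⊆ s, t.Nonempty → t ∈ X

/-- The full (closed) simplex on a finite vertex set `s`: all nonempty subsets. -/
def fullSimplex {V : Type} [DecidableEq V] (s : Finset V) : Finset (Finset V) :=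
  s.powerset.filter (fun t => t.Nonempty)

/-! On the full simplex, the simplices through a vertex `v` with `j + 1` vertices are counted by
`C(n - 1, j)`, and `∑ⱼ (-1)ʲ C(n - 1, j) / (j + 1) = 1 / n`; inclusion–exclusion for the
coefficients is inclusion–exclusion for sums over the simplices through `v`.

For uniqueness, let `s` be a maximal simplex of a complex `X`. Then `X` is the union of the full
simplex on `s` and the complex `X \ {s}`, which meet in the boundary of `s`; both pieces are
complexes strictly smaller than `X`, so by strong induction inclusion–exclusion pins down the
value on `X` from the values on full simplices. -/

open Finset

theorem sum_range_choose_mul_neg_one_pow_div_succ (n : ℕ) :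
    ∑ j ∈ range (n + 1), (n.choose j : ℚ) * ((-1) ^ j / (j + 1)) = 1 / (n + 1) := by
  have alternating : ∑ j ∈ range (n + 1), (-1 : ℚ) ^ j * (n + 1).choose (j + 1) = 1 := by
    have h := Int.alternating_sum_range_choose_of_ne n.succ_ne_zero
    rw [sum_range_succ'] at h
    have h' : ∑ j ∈ range (n + 1), (-1 : ℤ) ^ j * (n + 1).choose (j + 1) = 1 := by
      simp only [pow_succ, mul_neg_one, neg_mul, sum_neg_distrib, pow_zero, one_mul,
        Nat.choose_zero_right, Nat.cast_one] at h
      linarith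
    exact_mod_cast h'
  have absorb (j : ℕ) : (n.choose j : ℚ) / (j + 1) = (n + 1).choose (j + 1) / (n + 1) := by
    rw [div_eq_div_iff (by positivity) (by positivity), mul_comm]
    exact_mod_cast Nat.add_one_mul_choose_eq n j
  calc ∑ j ∈ range (n + 1), (n.choose j : ℚ) * ((-1) ^ j / (j + 1))
      = ∑ j ∈ range (n + 1), (-1 : ℚ) ^ j * (n + 1).choose (j + 1) / (n + 1) := by
        refine sum_congr rfl fun j _ => ?_
        rw [mul_div_assoc, ← absorb]
        ring
    _ = 1 / (n + 1) := by rw [← sum_div, alternating]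

section

variable {V : Type} [DecidableEq V]

@[simp]
theorem mem_fullSimplex {s t : Finset V} : t ∈ fullSimplex s ↔ t ⊆ s ∧ t.Nonempty := by
  simp [fullSimplex]

theorem eulerCoeff_empty (v : V) : eulerCoeff ∅ v = 0 := by
  simp [eulerCoeff]

theorem eulerCoeff_union_add_inter (X Y : Finset (Finset V)) (v : V) :
    eulerCoeff (X ∪ Y) v + eulerCoeff (X ∩ Y) v = eulerCoeff X v + eulerCoeff Y v := by
  simp only [eulerCoeff, filter_union, filter_inter_distrib]
  exact sum_union_inter

theorem sum_filter_mem_fullSimplex {M : Type*} [AddCommMonoid M] {s : Finset V} {v : V}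
    (hv : v ∈ s) (g : ℕ → M) :
    ∑ t ∈ (fullSimplex s).filter (v ∈ ·), g #t = ∑ u ∈ (s.erase v).powerset, g (#u + 1) := by
  refine sum_nbij' (fun t => t.erase v) (insert v) ?_ ?_ ?_ ?_ ?_
  · intro t ht
    simp only [mem_filter, mem_fullSimplex] at ht
    simpa using erase_subset_erase v ht.1.1
  · intro u hu
    simp only [mem_powerset] at hu
    simp only [mem_filter, mem_fullSimplex, mem_insert_self, and_true]
    exact ⟨insert_subset hv (hu.trans (erase_subset v s)), insert_nonempty v u⟩
  · intro t ht
    exact insert_erase (mem_filter.1 ht).2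
  · intro u hu
    exact erase_insert fun hvu => by simpa using mem_powerset.1 hu hvu
  · intro t ht
    rw [card_erase_add_one (mem_filter.1 ht).2]

theorem eulerCoeff_fullSimplex (s : Finset V) (v : V) :
    eulerCoeff (fullSimplex s) v = if v ∈ s then (#s : ℚ)⁻¹ else 0 := by
  split_ifs with hv
  · rw [eulerCoeff, sum_filter_mem_fullSimplex hv (fun k => (-1 : ℚ) ^ (k - 1) / k),
      sum_powerset_apply_card (fun k => (-1 : ℚ) ^ (k + 1 - 1) / ↑(k + 1))]
    simp only [nsmul_eq_mul, add_tsub_cancel_right, Nat.cast_add, Nat.cast_one]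
    rw [sum_range_choose_mul_neg_one_pow_div_succ, ← Nat.cast_add_one, card_erase_add_one hv,
      one_div]
  · refine sum_eq_zero fun t ht => absurd ?_ hv
    simp only [mem_filter, mem_fullSimplex] at ht
    exact ht.1.1 ht.2

theorem isComplex_fullSimplex (s : Finset V) : IsComplex (fullSimplex s) :=
  ⟨fun _ ht => (mem_fullSimplex.1 ht).2,
    fun _ ht _ hus hu => mem_fullSimplex.2 ⟨hus.trans (mem_fullSimplex.1 ht).1, hu⟩⟩

theorem maximal_mem_fullSimplex {s : Finset V} (hs : s.Nonempty) :
    Maximal (· ∈ fullSimplex s) s :=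
  ⟨mem_fullSimplex.2 ⟨subset_rfl, hs⟩, fun _ ht _ => (mem_fullSimplex.1 ht).1⟩

theorem IsComplex.fullSimplex_subset {X : Finset (Finset V)} (hX : IsComplex X) {s : Finset V}
    (hs : s ∈ X) : fullSimplex s ⊆ X :=
  fun _ ht => hX.2 s hs _ (mem_fullSimplex.1 ht).1 (mem_fullSimplex.1 ht).2

theorem IsComplex.erase_of_maximal {X : Finset (Finset V)} (hX : IsComplex X) {s : Finset V}
    (hs : Maximal (· ∈ X) s) : IsComplex (X.erase s) := by
  refine ⟨fun t ht => hX.1 t (mem_of_mem_erase ht), fun t ht u hut hu => ?_⟩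
  obtain ⟨hts, htX⟩ := mem_erase.1 ht
  refine mem_erase.2 ⟨?_, hX.2 t htX u hut hu⟩
  rintro rfl
  exact hts (le_antisymm (hs.2 htX hut) hut)

theorem IsComplex.eq_of_inclusion_exclusion {M : Type*} [AddCommGroup M]
    {f g : Finset (Finset V) → M}
    (hf : ∀ X Y, IsComplex X → IsComplex Y → f (X ∪ Y) = f X + f Y - f (X ∩ Y))
    (hg : ∀ X Y, IsComplex X → IsComplex Y → g (X ∪ Y) = g X + g Y - g (X ∩ Y))
    (h_simplex : ∀ s : Finset V, s.Nonempty → f (fullSimplex s) = g (fullSimplex s))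
    (h_empty : f ∅ = g ∅) {X : Finset (Finset V)} (hX : IsComplex X) : f X = g X := by
  induction X using strongInduction with
  | H X ih =>
  obtain rfl | hne := X.eq_empty_or_nonempty
  · exact h_empty
  obtain ⟨s, hs⟩ := X.exists_maximal hne
  have hs_max := maximal_mem_fullSimplex (hX.1 s hs.1)
  have hσ_sub := hX.fullSimplex_subset hs.1
  have h_union : fullSimplex s ∪ X.erase s = X := by
    rw [union_erase_of_mem hs_max.1, union_eq_right.2 hσ_sub]
  have h_inter : fullSimplex s ∩ X.erase s = (fullSimplex s).erase s := by
    rw [inter_erase, inter_eq_left.2 hσ_sub]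
  have hσ := isComplex_fullSimplex s
  have hX' := hX.erase_of_maximal hs
  have hδ := hσ.erase_of_maximal hs_max
  have hX'_lt : X.erase s ⊂ X := erase_ssubset hs.1
  have hδ_lt : (fullSimplex s).erase s ⊂ X := (erase_subset_erase s hσ_sub).trans_ssubset hX'_lt
  calc f X = f (fullSimplex s) + f (X.erase s) - f ((fullSimplex s).erase s) := by
        rw [← h_inter, ← hf _ _ hσ hX', h_union]
    _ = g (fullSimplex s) + g (X.erase s) - g ((fullSimplex s).erase s) := by
        rw [h_simplex s (hX.1 s hs.1), ih _ hX'_lt hX', ih _ hδ_lt hδ]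
    _ = g X := by rw [← h_inter, ← hg _ _ hσ hX', h_union]

end

/-- characterization of the Euler cycle. The Euler cycle is the
unique assignment `Z ↦ e(Z)` of rational `0`-chains to finite simplicial
complexes satisfying (1) inclusion-exclusion `e(X ∪ Y) = e(X) + e(Y) − e(X ∩ Y)`,
(2) calibration `e(σ^{(k)}) = (∑_v v)/(k+1)` on the full simplex with `k+1`
vertices, and (3) `e(∅) = 0`: the Euler cycle satisfies (1)–(3), and any
assignment satisfying (1)–(3) agrees with the Euler cycle on every complex. -/
theorem eulerCycle_characterization {V : Type} [DecidableEq V] :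
    ((∀ X Y : Finset (Finset V), IsComplex X → IsComplex Y →
        (fun v => eulerCoeff (X ∪ Y) v) =
          (fun v => eulerCoeff X v) + (fun v => eulerCoeff Y v) -
            (fun v => eulerCoeff (X ∩ Y) v)) ∧
      (∀ s : Finset V, s.Nonempty →
        (fun v => eulerCoeff (fullSimplex s) v) =
          fun v => if v ∈ s then ((s.card : ℚ))⁻¹ else 0) ∧
      (fun v => eulerCoeff (∅ : Finset (Finset V)) v) = 0) ∧
    ∀ f : Finset (Finset V) → (V → ℚ),
      (∀ X Y : Finset (Finset V), IsComplex X → IsComplex Y →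
        f (X ∪ Y) = f X + f Y - f (X ∩ Y)) →
      (∀ s : Finset V, s.Nonempty →
        f (fullSimplex s) = fun v => if v ∈ s then ((s.card : ℚ))⁻¹ else 0) →
      f (∅ : Finset (Finset V)) = 0 →
      ∀ X : Finset (Finset V), IsComplex X → f X = fun v => eulerCoeff X v := by
  have h_union (X Y : Finset (Finset V)) :
      eulerCoeff (X ∪ Y) = eulerCoeff X + eulerCoeff Y - eulerCoeff (X ∩ Y) :=
    funext fun v => eq_sub_of_add_eq (eulerCoeff_union_add_inter X Y v)
  have h_simplex (s : Finset V) :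
      eulerCoeff (fullSimplex s) = fun v => if v ∈ s then (#s : ℚ)⁻¹ else 0 :=
    funext (eulerCoeff_fullSimplex s)
  have h_empty : eulerCoeff (∅ : Finset (Finset V)) = 0 := funext eulerCoeff_empty
  refine ⟨⟨fun X Y _ _ => h_union X Y, fun s _ => h_simplex s, h_empty⟩,
    fun f hf hf_simplex hf_empty X hX => ?_⟩
  exact hX.eq_of_inclusion_exclusion hf (fun X Y _ _ => h_union X Y)
    (fun s hs => (hf_simplex s hs).trans (h_simplex s).symm) (hf_empty.trans h_empty.symm)
end
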